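/- Let f : ℝ^n → ℝ be monotone in each coordinate (u ≤ v componentwise implies f(u) ≤ f(v)), and for each i let Q_i : A_i → ℝ on finite action sets A_i. Then max over joint actions (a_1,…,a_n) of f(Q_1(a_1),…,Q_n(a_n)) equals f(max_{a_1} Q_1(a_1),…,max_{a_n} Q_n(a_n)). In particular, the joint argmax can be computed by independent per-agent argmaxes (the Individual-Global-Max property of monotonic value factorization). -/
import Mathlib


theorem stmt_11 {n : ℕ} (A : Fin n → Type*)
    [∀ i, Fintype (A i)] [∀ i, Nonempty (A i)]
    (f : (Fin n → ℝ) → ℝ)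
    (hf : ∀ u v : Fin n → ℝ, (∀ i, u i ≤ v i) → f u ≤ f v)
    (Q : ∀ i, A i → ℝ) :
    (⨆ a : (∀ i, A i), f (fun i => Q i (a i))) =
      f (fun i => ⨆ b, Q i b) := by
  have hmax : ∀ i, ∃ b : A i, ∀ c, Q i c ≤ Q i b := fun i =>
    Finite.exists_max (Q i)
  choose a ha using hmax
  have hsup : ∀ i, (⨆ b, Q i b) = Q i (a i) := fun i =>
    le_antisymm (ciSup_le (ha i)) (le_ciSup (Finite.bddAbove_range _) (a i))
  apply le_antisymm
  · exact ciSup_le fun c => hf _ _ fun i => le_ciSup (Finite.bddAbove_range _) (c i)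
  · have : f (fun i => ⨆ b, Q i b) = f (fun i => Q i (a i)) := by
      congr 1; funext i; exact hsup i
    rw [this]
    exact le_ciSup (f := fun c : (∀ i, A i) => f fun i => Q i (c i)) (Finite.bddAbove_range _) a
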